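/- Let β₁, β₂, δ₁, δ₂ ≥ 0 with β₁+δ₁ > 0, β₂+δ₂ > 0, and α₁, α₂, γ₁, γ₂ > 0. Suppose |A_n| ≤ (n+1)/2 and |B_n| ≤ (n−1)/2 for n ≥ 2. If W''_{(α₁,β₁),(γ₁,δ₁)}(1) + 2 W'_{(α₁,β₁),(γ₁,δ₁)}(1) + W''_{(α₂,β₂),(γ₂,δ₂)}(1) ≤ 4, then for every complex ε with |ε| = 1, ∑_{n=2}^∞ n|t_n| ≤ 1, where t_n = Γ(α₁)Γ(γ₁)A_n /(Γ(α₁+(n−1)β₁)Γ(γ₁+(n−1)δ₁)) + ε Γ(α₂)Γ(γ₂)B_n /(Γ(α₂+(n−1)β₂)Γ(γ₂+(n−1)δ₂)). -/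

import Mathlib

/-!
Write `c n`, `d n` for the Wright coefficients of `x ^ (n + 2)`. The hypotheses on `A` and `B` bound
the `n`-th term of the series by `(n + 2) ((n + 3) c n + (n + 1) d n) / 2`, and since
`(n + 2) (n + 3) = (n + 2) (n + 1) + 2 (n + 2)` the sum of these majorants is
`(W₁''(1) + 2 (W₁'(1) - 1) + W₂''(1)) / 2 ≤ 1`.

Differentiating the Wright series term by term is legitimate because it is entire: from
`M ^ (y - 2) ≤ exp M * Γ(y)` (compare with `Γ(⌊y⌋) = (⌊y⌋ - 1)!`), taken with `M ^ b = 2 r + 1`,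
`rⁿ / Γ(a + n b)` is eventually dominated by a geometric sequence for every `r` once `b > 0`, and the
other Gamma factor is bounded below by the minimum of `Γ` on `(0, ∞)`.
-/

open Real

/-- The normalized four-parameter Wright function
`W_{(a,b),(c,d)}(x) = x + ∑_{n=2}^∞ Γ(a)Γ(c) xⁿ / (Γ(a+(n-1)b)Γ(c+(n-1)d))`
(as a function of a real variable, evaluated along the real axis). -/
noncomputable def wrightW (a b c d : ℝ) : ℝ → ℝ := fun x =>
  x + ∑' n : ℕ, Real.Gamma a * Real.Gamma c /
    (Real.Gamma (a + ((n : ℝ) + 1) * b) * Real.Gamma (c + ((n : ℝ) + 1) * d)) * x ^ (n + 2)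

section PowerSeries

variable {c : ℕ → ℝ} (hc : ∀ r, 0 < r → Summable fun n => ‖c n‖ * r ^ n)
include hc

theorem summable_norm_mul_add_mul_pow (k : ℕ) (r : ℝ) (hr : 0 < r) :
    Summable fun n => ‖c n * (n + k)‖ * r ^ n := by
  refine .of_nonneg_of_le (fun n => by positivity) (fun n => ?_)
    ((hc (2 * r) (by positivity)).mul_left ((k : ℝ) + 1))
  have hn : (n : ℝ) < 2 ^ n := by exact_mod_cast Nat.lt_two_pow_self
  have h2n : (1 : ℝ) ≤ 2 ^ n := one_le_pow₀ one_le_two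
  have hnk : (n : ℝ) + k ≤ (k + 1) * 2 ^ n := by nlinarith [(k.cast_nonneg : (0 : ℝ) ≤ k)]
  rw [norm_mul, Real.norm_of_nonneg (by positivity : (0 : ℝ) ≤ n + k)]
  calc ‖c n‖ * (n + k) * r ^ n ≤ ‖c n‖ * ((k + 1) * 2 ^ n) * r ^ n := by gcongr
    _ = (k + 1) * (‖c n‖ * (2 * r) ^ n) := by ring

theorem summable_mul_add (k : ℕ) : Summable fun n => c n * (n + k) :=
  .of_norm <| by simpa using summable_norm_mul_add_mul_pow hc k 1 one_pos

theorem summable_mul_pow_add (k : ℕ) (x : ℝ) : Summable fun n => c n * x ^ (n + k) := by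
  refine .of_norm_bounded ((hc (|x| + 1) (by positivity)).mul_right ((|x| + 1) ^ k)) fun n => ?_
  rw [norm_mul, norm_pow, Real.norm_eq_abs x, mul_assoc, ← pow_add]
  gcongr
  linarith

theorem hasDerivAt_tsum_mul_pow_add (k : ℕ) (x : ℝ) :
    HasDerivAt (fun y => ∑' n, c n * y ^ (n + k)) (∑' n, c n * (n + k) * x ^ (n + k - 1)) x := by
  set r := |x| + 1
  have hr : 1 ≤ r := by simp [r]
  refine hasDerivAt_tsum_of_isPreconnected (g := fun n y => c n * y ^ (n + k))
    (g' := fun n y => c n * (n + k) * y ^ (n + k - 1))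
    ((summable_norm_mul_add_mul_pow hc k r (by positivity)).mul_right (r ^ k))
    isOpen_Ioo (convex_Ioo (-r) r).isPreconnected (fun n y _ => ?_) (fun n y hy => ?_)
    (y₀ := 0) ⟨by linarith, by linarith⟩ (summable_mul_pow_add hc k 0) (abs_lt.mp (lt_add_one |x|))
  · simpa only [Nat.cast_add, mul_assoc] using (hasDerivAt_pow (n + k) y).const_mul (c n)
  · have hy : |y| ≤ r := (abs_lt.mpr hy).le
    rw [norm_mul, norm_pow, Real.norm_eq_abs y, mul_assoc, ← pow_add]
    gcongr
    calc |y| ^ (n + k - 1) ≤ r ^ (n + k - 1) := by gcongr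
      _ ≤ r ^ (n + k) := pow_le_pow_right₀ hr (Nat.sub_le _ _)

end PowerSeries

theorem Real.rpow_sub_two_le_exp_mul_Gamma {M y : ℝ} (hM : 1 ≤ M) (hy : 2 ≤ y) :
    M ^ (y - 2) ≤ exp M * Gamma y := by
  obtain ⟨j, hj⟩ : ∃ j, ⌊y⌋₊ = j + 2 :=
    Nat.exists_eq_add_of_le' (Nat.le_floor (by exact_mod_cast hy))
  have hjy : (j : ℝ) + 2 ≤ y := by exact_mod_cast hj ▸ Nat.floor_le (by linarith)
  have hyj : y < j + 3 := by
    have := Nat.lt_floor_add_one y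
    rw [hj] at this
    push_cast at this
    linarith
  calc M ^ (y - 2) ≤ M ^ ((j + 1 : ℕ) : ℝ) :=
        rpow_le_rpow_of_exponent_le hM (by push_cast; linarith)
    _ = M ^ (j + 1) := rpow_natCast _ _
    _ ≤ exp M * (j + 1).factorial := by
        rw [← div_le_iff₀ (by positivity)]
        exact pow_div_factorial_le_exp M (zero_le_one.trans hM) _
    _ = exp M * Gamma (j + 2) := by
        rw [show (j : ℝ) + 2 = ((j + 1 : ℕ) : ℝ) + 1 by push_cast; ring, Gamma_nat_eq_factorial]
    _ ≤ exp M * Gamma y := by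
        gcongr
        exact Gamma_strictMonoOn_Ici.monotoneOn (by simp) (by simp; linarith) hjy

theorem Real.summable_pow_div_Gamma_add_mul {a b r : ℝ} (hb : 0 < b) (hr : 0 < r) :
    Summable fun n : ℕ => r ^ n / Gamma (a + n * b) := by
  set M := (2 * r + 1) ^ b⁻¹
  have hM : 1 ≤ M := one_le_rpow (by linarith) (inv_nonneg.2 hb.le)
  have hMb : M ^ b = 2 * r + 1 := rpow_inv_rpow (by positivity) hb.ne'
  have hq : r / (2 * r + 1) < 1 := by rw [div_lt_one (by positivity)]; linarith
  refine .of_norm_bounded_eventually_nat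
    ((summable_geometric_of_lt_one (by positivity) hq).mul_left (exp M / M ^ (a - 2))) ?_
  obtain ⟨N, hN⟩ := exists_nat_ge ((2 - a) / b)
  filter_upwards [Filter.eventually_ge_atTop N] with n hn
  have hy : 2 ≤ a + n * b := by
    have : (2 - a) / b ≤ n := hN.trans (by exact_mod_cast hn)
    rw [div_le_iff₀ hb] at this
    linarith
  have hΓ : 0 < Gamma (a + n * b) := Gamma_pos_of_pos (by linarith)
  have hsplit : M ^ (a + n * b - 2) = M ^ (a - 2) * (2 * r + 1) ^ n := by
    rw [show a + n * b - 2 = (a - 2) + b * n by ring, rpow_add (by positivity),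
      rpow_mul (by positivity), hMb, rpow_natCast]
  rw [Real.norm_of_nonneg (by positivity), div_le_iff₀ hΓ]
  calc r ^ n = exp M / M ^ (a - 2) * (r / (2 * r + 1)) ^ n * (M ^ (a + n * b - 2) / exp M) := by
        rw [hsplit, div_pow]
        field_simp
    _ ≤ exp M / M ^ (a - 2) * (r / (2 * r + 1)) ^ n * Gamma (a + n * b) := by
        gcongr
        rw [div_le_iff₀' (exp_pos M)]
        exact rpow_sub_two_le_exp_mul_Gamma hM hy

noncomputable def wrightCoeff (a b c d : ℝ) (n : ℕ) : ℝ :=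
  Gamma a * Gamma c / (Gamma (a + ((n : ℝ) + 1) * b) * Gamma (c + ((n : ℝ) + 1) * d))

section Wright

variable {a b c d : ℝ}

theorem wrightCoeff_comm : wrightCoeff a b c d = wrightCoeff c d a b := by
  ext n
  rw [wrightCoeff, wrightCoeff, mul_comm (Gamma a), mul_comm (Gamma (a + _))]

theorem wrightCoeff_pos (ha : 0 < a) (hc : 0 < c) (hb : 0 ≤ b) (hd : 0 ≤ d) (n : ℕ) :
    0 < wrightCoeff a b c d n :=
  div_pos (mul_pos (Gamma_pos_of_pos ha) (Gamma_pos_of_pos hc))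
    (mul_pos (Gamma_pos_of_pos (by positivity)) (Gamma_pos_of_pos (by positivity)))

theorem summable_wrightCoeff_mul_pow_of_pos (ha : 0 < a) (hc : 0 < c) (hb : 0 < b) (hd : 0 ≤ d)
    {r : ℝ} (hr : 0 < r) : Summable fun n => wrightCoeff a b c d n * r ^ n := by
  obtain ⟨x₀, hx₀, hmin⟩ := exists_isMinOn_Gamma_Ioi
  have hm : 0 < Gamma x₀ := Gamma_pos_of_pos (by linarith [hx₀.1])
  refine .of_nonneg_of_le (fun n => (mul_pos (wrightCoeff_pos ha hc hb.le hd n) (pow_pos hr n)).le)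
    (fun n => ?_) ((summable_pow_div_Gamma_add_mul (a := a + b) hb hr).mul_left
      (Gamma a * Gamma c / Gamma x₀))
  have hz : Gamma x₀ ≤ Gamma (c + (n + 1) * d) :=
    isMinOn_iff.mp hmin _ (show 0 < c + (n + 1) * d by positivity)
  have hy : 0 < Gamma (a + (n + 1) * b) := Gamma_pos_of_pos (by positivity)
  have hΓa := Gamma_pos_of_pos ha
  have hΓc := Gamma_pos_of_pos hc
  rw [wrightCoeff, show a + b + n * b = a + (n + 1) * b by ring]
  calc Gamma a * Gamma c / (Gamma (a + (n + 1) * b) * Gamma (c + (n + 1) * d)) * r ^ n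
      ≤ Gamma a * Gamma c / (Gamma (a + (n + 1) * b) * Gamma x₀) * r ^ n := by gcongr
    _ = Gamma a * Gamma c / Gamma x₀ * (r ^ n / Gamma (a + (n + 1) * b)) := by ring

theorem summable_norm_wrightCoeff_mul_pow (ha : 0 < a) (hc : 0 < c) (hb : 0 ≤ b) (hd : 0 ≤ d)
    (hbd : 0 < b + d) (r : ℝ) (hr : 0 < r) :
    Summable fun n => ‖wrightCoeff a b c d n‖ * r ^ n := by
  simp_rw [Real.norm_of_nonneg (wrightCoeff_pos ha hc hb hd _).le]
  rcases hb.lt_or_eq with hb | rfl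
  · exact summable_wrightCoeff_mul_pow_of_pos ha hc hb hd hr
  · rw [wrightCoeff_comm]
    exact summable_wrightCoeff_mul_pow_of_pos hc ha (by simpa using hbd) le_rfl hr

variable (ha : 0 < a) (hc : 0 < c) (hb : 0 ≤ b) (hd : 0 ≤ d) (hbd : 0 < b + d)
include ha hc hb hd hbd

theorem deriv_wrightW :
    deriv (wrightW a b c d) = fun x => 1 + ∑' n, wrightCoeff a b c d n * (n + 2) * x ^ (n + 1) := by
  funext x
  have h : HasDerivAt (wrightW a b c d) _ x := (hasDerivAt_id' x).add
    (hasDerivAt_tsum_mul_pow_add (summable_norm_wrightCoeff_mul_pow ha hc hb hd hbd) 2 x)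
  simpa using h.deriv

theorem iteratedDeriv_two_wrightW :
    iteratedDeriv 2 (wrightW a b c d)
      = fun x => ∑' n, wrightCoeff a b c d n * (n + 2) * (n + 1) * x ^ n := by
  funext x
  rw [iteratedDeriv_succ, iteratedDeriv_one, deriv_wrightW ha hc hb hd hbd]
  have := (hasDerivAt_tsum_mul_pow_add (summable_norm_mul_add_mul_pow
    (summable_norm_wrightCoeff_mul_pow ha hc hb hd hbd) 2) 1 x).const_add 1
  simpa using this.deriv

theorem hasSum_deriv_wrightW_one :
    HasSum (fun n => wrightCoeff a b c d n * (n + 2)) (deriv (wrightW a b c d) 1 - 1) := by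
  rw [deriv_wrightW ha hc hb hd hbd]
  simpa using (summable_mul_add (summable_norm_wrightCoeff_mul_pow ha hc hb hd hbd) 2).hasSum

theorem hasSum_iteratedDeriv_two_wrightW_one :
    HasSum (fun n => wrightCoeff a b c d n * (n + 2) * (n + 1))
      (iteratedDeriv 2 (wrightW a b c d) 1) := by
  rw [iteratedDeriv_two_wrightW ha hc hb hd hbd]
  simpa using (summable_mul_add (summable_norm_mul_add_mul_pow
    (summable_norm_wrightCoeff_mul_pow ha hc hb hd hbd) 2) 1).hasSum

end Wright

theorem norm_ofReal_mul_add_mul_ofReal_mul_le {p q : ℝ} (hp : 0 ≤ p) (hq : 0 ≤ q) {ε : ℂ}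
    (hε : ‖ε‖ = 1) (u v : ℂ) : ‖(p : ℂ) * u + ε * q * v‖ ≤ p * ‖u‖ + q * ‖v‖ :=
  calc ‖(p : ℂ) * u + ε * q * v‖ ≤ ‖(p : ℂ) * u‖ + ‖ε * q * v‖ := norm_add_le _ _
    _ = p * ‖u‖ + q * ‖v‖ := by simp [hε, abs_of_nonneg hp, abs_of_nonneg hq]

/-- key estimate for close-to-convexity of L(f) when f ∈ K_H^o,
i.e. |Aₙ| ≤ (n+1)/2 and |Bₙ| ≤ (n−1)/2 for n ≥ 2. -/
theorem Lf_convex_to_close_to_convex_estimate (α₁ β₁ γ₁ δ₁ α₂ β₂ γ₂ δ₂ : ℝ) (A B : ℕ → ℂ)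
    (hβ₁ : 0 ≤ β₁) (hδ₁ : 0 ≤ δ₁) (hβδ₁ : 0 < β₁ + δ₁)
    (hβ₂ : 0 ≤ β₂) (hδ₂ : 0 ≤ δ₂) (hβδ₂ : 0 < β₂ + δ₂)
    (hα₁ : 0 < α₁) (hγ₁ : 0 < γ₁) (hα₂ : 0 < α₂) (hγ₂ : 0 < γ₂)
    (hA : ∀ n : ℕ, 2 ≤ n → ‖A n‖ ≤ ((n : ℝ) + 1) / 2)
    (hB : ∀ n : ℕ, 2 ≤ n → ‖B n‖ ≤ ((n : ℝ) - 1) / 2)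
    (hyp : iteratedDeriv 2 (wrightW α₁ β₁ γ₁ δ₁) 1
        + 2 * deriv (wrightW α₁ β₁ γ₁ δ₁) 1
        + iteratedDeriv 2 (wrightW α₂ β₂ γ₂ δ₂) 1 ≤ 4) :
    ∀ ε : ℂ, ‖ε‖ = 1 →
      ∑' n : ℕ, ((n : ℝ) + 2) *
        ‖((Real.Gamma α₁ * Real.Gamma γ₁ /
            (Real.Gamma (α₁ + ((n : ℝ) + 1) * β₁) * Real.Gamma (γ₁ + ((n : ℝ) + 1) * δ₁)) : ℝ) : ℂ) * A (n + 2)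
          + ε * ((Real.Gamma α₂ * Real.Gamma γ₂ /
            (Real.Gamma (α₂ + ((n : ℝ) + 1) * β₂) * Real.Gamma (γ₂ + ((n : ℝ) + 1) * δ₂)) : ℝ) : ℂ) * B (n + 2)‖ ≤ 1 := by
  intro ε hε
  set c₁ := wrightCoeff α₁ β₁ γ₁ δ₁
  set c₂ := wrightCoeff α₂ β₂ γ₂ δ₂
  change ∑' n : ℕ, ((n : ℝ) + 2) * ‖(c₁ n : ℂ) * A (n + 2) + ε * (c₂ n : ℂ) * B (n + 2)‖ ≤ 1
  have hW₁' := hasSum_deriv_wrightW_one hα₁ hγ₁ hβ₁ hδ₁ hβδ₁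
  have hW₁'' := hasSum_iteratedDeriv_two_wrightW_one hα₁ hγ₁ hβ₁ hδ₁ hβδ₁
  have hW₂'' := hasSum_iteratedDeriv_two_wrightW_one hα₂ hγ₂ hβ₂ hδ₂ hβδ₂
  have hmajorant := ((hW₁''.add (hW₁'.mul_left 2)).add hW₂'').div_const 2
  have hterm (n : ℕ) : ((n : ℝ) + 2) * ‖(c₁ n : ℂ) * A (n + 2) + ε * (c₂ n : ℂ) * B (n + 2)‖
      ≤ (c₁ n * (n + 2) * (n + 1) + 2 * (c₁ n * (n + 2)) + c₂ n * (n + 2) * (n + 1)) / 2 := by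
    have hAn := hA (n + 2) (by omega)
    have hBn := hB (n + 2) (by omega)
    push_cast at hAn hBn
    have hc₁ := (wrightCoeff_pos hα₁ hγ₁ hβ₁ hδ₁ n).le
    have hc₂ := (wrightCoeff_pos hα₂ hγ₂ hβ₂ hδ₂ n).le
    calc _ ≤ ((n : ℝ) + 2) * (c₁ n * ‖A (n + 2)‖ + c₂ n * ‖B (n + 2)‖) := by
          gcongr
          exact norm_ofReal_mul_add_mul_ofReal_mul_le hc₁ hc₂ hε _ _
      _ ≤ ((n : ℝ) + 2) * (c₁ n * ((n + 2 + 1) / 2) + c₂ n * ((n + 2 - 1) / 2)) := by gcongr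
      _ = _ := by ring
  calc _ ≤ _ := Summable.tsum_le_tsum hterm
        (.of_nonneg_of_le (fun n => by positivity) hterm hmajorant.summable) hmajorant.summable
    _ ≤ 1 := by
      rw [hmajorant.tsum_eq]
      linarith
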